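/- Let L be the q×q lower triangular matrix over A with all diagonal entries equal to −1 and with (i,j)-entry M_{i,j} for i > j, and let U be the q×q upper triangular matrix with all diagonal entries equal to 1 and with (i,j)-entry −M_{i,j} for i < j. Then the product L·U equals the q×q matrix whose (i,j)-entry is B_{i,j} for i ≠ j and whose (i,i)-entry is B_{i,i} − C_{i,i} − 1. -/

import Mathlib

open scoped BigOperators

/-- A finite sequence of positive integers is *admissible* if between any two
occurrences of a number `s` there is an entry greater than `s`. -/
def IsAdmissible (l : List ℕ) : Prop :=
  ∀ (l₁ l₂ l₃ : List ℕ) (s : ℕ), l = l₁ ++ s :: (l₂ ++ s :: l₃) → ∃ t ∈ l₂, s < t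

/-- `Dset n` is the set of admissible sequences all of whose entries lie in
`{1, …, n-1}` (including the empty sequence). -/
def Dset (n : ℕ) : Set (List ℕ) :=
  {l | IsAdmissible l ∧ ∀ x ∈ l, 1 ≤ x ∧ x < n}

/-- The product `B i i₁ * B i₁ i₂ * ⋯ * B i_c j` along a sequence `[i₁, …, i_c]`;
the empty sequence contributes `B i j`. -/
def pathProd {A : Type*} [Ring A] (B : ℕ → ℕ → A) (i j : ℕ) : List ℕ → A
  | [] => B i j
  | a :: l => B i a * pathProd B a j l

/-- `M i j = Σ_{(i₁,…,i_c) ∈ D_{min(i,j)}} B i i₁ ⋯ B i_c j`. -/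
noncomputable def Mpoly {A : Type*} [Ring A] (B : ℕ → ℕ → A) (i j : ℕ) : A :=
  ∑ᶠ l ∈ Dset (min i j), pathProd B i j l

/-- `C i j` for `i < j` sums `B i i₁ ⋯ B i_c j` over sequences with
`(i, i₁, …, i_c) ∈ D_j`; and `C n n = M n n`. -/
noncomputable def Cpoly {A : Type*} [Ring A] (B : ℕ → ℕ → A) (i j : ℕ) : A :=
  if i = j then Mpoly B i j
  else ∑ᶠ l ∈ {l : List ℕ | (i :: l) ∈ Dset j}, pathProd B i j l

/-- The generators `B_{i,j}` of the free noncommutative unital ℤ-algebra. -/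
noncomputable def Bgen : ℕ → ℕ → FreeAlgebra ℤ (ℕ × ℕ) :=
  fun i j => FreeAlgebra.ι ℤ (i, j)

/-- The commuting indeterminates `B_{i,j}` of the polynomial ring `ℤ[B_{i,j}]`. -/
noncomputable def Bcomm : ℕ → ℕ → MvPolynomial (ℕ × ℕ) ℤ :=
  fun i j => MvPolynomial.X (i, j)

/-!
A nonempty admissible sequence with entries in `{1, …, n-1}` splits uniquely at its largest
entry `k`, which occurs only once, into two admissible sequences with entries in `{1, …, k-1}`.
Hence `M i j = B i j + ∑_{1 ≤ k < min i j} M i k * M k j`, and this recursion is exactly the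
entrywise statement of `L * U = B - diag (C i i + 1)`: in `(L * U) i j` the terms `k < min i j`
contribute `-M i k * M k j` and the term `k = min i j` contributes `M i j`, or `-1` if `i = j`.
-/

namespace IsAdmissible

variable {l l₁ l₂ : List ℕ} {k : ℕ}

lemma of_infix (hl : l <:+: l₁) (h : IsAdmissible l₁) : IsAdmissible l := by
  obtain ⟨u, v, rfl⟩ := hl
  intro a b c s hs
  exact h (u ++ a) b (c ++ v) s (by simp [hs])

lemma append_cons (h₁ : IsAdmissible l₁) (h₂ : IsAdmissible l₂)
    (hlt : ∀ x ∈ l₁ ++ l₂, x < k) : IsAdmissible (l₁ ++ k :: l₂) := by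
  intro a b c s hs
  simp only [List.append_eq_append_iff, List.cons_eq_append_iff, List.cons.injEq] at hs
  -- the two occurrences of `s` lie in `l₂`, in `l₁`, on both sides of `k`, or one of them is `k`
  rcases hs with ⟨_, rfl, ⟨rfl, rfl, rfl⟩ | ⟨_, rfl, rfl⟩⟩ | ⟨_, rfl, ⟨rfl, rfl, rfl⟩ |
    ⟨_, rfl, ⟨_, rfl, ⟨rfl, rfl, rfl⟩ | ⟨_, rfl, rfl⟩⟩ | ⟨_, rfl, ⟨rfl, rfl, rfl⟩ | ⟨_, rfl, rfl⟩⟩⟩⟩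
  · exact absurd (hlt s (by simp)) (lt_irrefl s)
  · exact h₂ _ _ _ _ rfl
  · exact absurd (hlt k (by simp)) (lt_irrefl k)
  · exact absurd (hlt k (by simp)) (lt_irrefl k)
  · exact h₁ _ _ _ _ rfl
  · exact absurd (hlt s (by simp)) (lt_irrefl s)
  · exact ⟨k, by simp, hlt s (by simp)⟩

lemma forall_lt_of_forall_le (h : IsAdmissible (l₁ ++ k :: l₂)) (hle : ∀ x ∈ l₁ ++ l₂, x ≤ k) :
    ∀ x ∈ l₁ ++ l₂, x < k := by
  refine fun x hx => (hle x hx).lt_of_ne ?_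
  rintro rfl
  rcases List.mem_append.1 hx with hx | hx
  · obtain ⟨u, v, rfl⟩ := List.append_of_mem hx
    obtain ⟨t, ht, hxt⟩ := h u v l₂ x (by simp)
    exact hxt.not_ge (hle t (by simp [ht]))
  · obtain ⟨u, v, rfl⟩ := List.append_of_mem hx
    obtain ⟨t, ht, hxt⟩ := h l₁ u v x rfl
    exact hxt.not_ge (hle t (by simp [ht]))

end IsAdmissible

section Dset

variable {l l₁ l₂ m₁ m₂ : List ℕ} {k k' n : ℕ}

lemma nil_mem_Dset (n : ℕ) : [] ∈ Dset n :=
  ⟨fun _ _ _ _ h => by simp at h, by simp⟩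

lemma forall_mem_append_lt (h₁ : l₁ ∈ Dset k) (h₂ : l₂ ∈ Dset k) : ∀ x ∈ l₁ ++ l₂, x < k := by
  simp only [List.mem_append]
  rintro x (hx | hx)
  exacts [(h₁.2 x hx).2, (h₂.2 x hx).2]

lemma append_cons_mem_Dset (hk : k ∈ Finset.Ico 1 n) (h₁ : l₁ ∈ Dset k) (h₂ : l₂ ∈ Dset k) :
    l₁ ++ k :: l₂ ∈ Dset n := by
  obtain ⟨hk1, hkn⟩ := Finset.mem_Ico.1 hk
  refine ⟨h₁.1.append_cons h₂.1 (forall_mem_append_lt h₁ h₂), fun x hx => ?_⟩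
  simp only [List.mem_append, List.mem_cons] at hx
  rcases hx with hx | rfl | hx
  · exact ⟨(h₁.2 x hx).1, (h₁.2 x hx).2.trans hkn⟩
  · exact ⟨hk1, hkn⟩
  · exact ⟨(h₂.2 x hx).1, (h₂.2 x hx).2.trans hkn⟩

lemma exists_append_cons_of_mem_Dset (hl : l ∈ Dset n) (hne : l ≠ []) :
    ∃ k ∈ Finset.Ico 1 n, ∃ l₁ ∈ Dset k, ∃ l₂ ∈ Dset k, l₁ ++ k :: l₂ = l := by
  obtain ⟨k, hk, hmax⟩ := l.toFinset.exists_max_image id (by simpa using hne)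
  obtain ⟨l₁, l₂, rfl⟩ := List.append_of_mem (List.mem_toFinset.1 hk)
  have hlt := hl.1.forall_lt_of_forall_le fun x hx => hmax x (by simp at hx ⊢; tauto)
  have hmem : ∀ x ∈ l₁ ++ l₂, x ∈ l₁ ++ k :: l₂ := by simp; tauto
  refine ⟨k, Finset.mem_Ico.2 (hl.2 k (by simp)), l₁, ⟨hl.1.of_infix ⟨[], k :: l₂, by simp⟩, ?_⟩,
    l₂, ⟨hl.1.of_infix ⟨l₁ ++ [k], [], by simp⟩, ?_⟩, rfl⟩
  all_goals exact fun x hx => ⟨(hl.2 x (hmem x (by simp [hx]))).1, hlt x (by simp [hx])⟩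

lemma eq_of_append_cons_eq (hl : ∀ x ∈ l₁ ++ l₂, x < k) (hm : ∀ x ∈ m₁ ++ m₂, x < k')
    (h : l₁ ++ k :: l₂ = m₁ ++ k' :: m₂) : l₁ = m₁ ∧ k = k' ∧ l₂ = m₂ := by
  have le_max {l₁ l₂ : List ℕ} {k x : ℕ} (hl : ∀ x ∈ l₁ ++ l₂, x < k)
      (hx : x ∈ l₁ ++ k :: l₂) : x ≤ k := by
    simp only [List.mem_append, List.mem_cons] at hx
    rcases hx with hx | rfl | hx
    · exact (hl x (List.mem_append_left _ hx)).le
    · rfl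
    · exact (hl x (List.mem_append_right _ hx)).le
  obtain rfl : k = k' := le_antisymm (le_max hm (h ▸ by simp)) (le_max hl (h ▸ by simp))
  have notMem {l₁ l₂ : List ℕ} (hl : ∀ x ∈ l₁ ++ l₂, x < k) : k ∉ l₁ ∧ k ∉ l₂ :=
    ⟨fun hk => (hl k (List.mem_append_left _ hk)).false,
      fun hk => (hl k (List.mem_append_right _ hk)).false⟩
  exact (List.append_cons_inj_of_notMem (notMem hl).1 (notMem hl).2).1 h

end Dset

lemma Dset_eq_insert (n : ℕ) :
    Dset n = insert [] (⋃ k ∈ (Finset.Ico 1 n : Set ℕ),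
      (fun p : List ℕ × List ℕ => p.1 ++ k :: p.2) '' Dset k ×ˢ Dset k) := by
  ext l
  simp only [Set.mem_insert_iff, Set.mem_iUnion, Set.mem_image, Set.mem_prod, Prod.exists,
    Finset.mem_coe, exists_prop]
  constructor
  · intro hl
    rcases eq_or_ne l [] with rfl | hne
    · exact Or.inl rfl
    · obtain ⟨k, hk, l₁, h₁, l₂, h₂, rfl⟩ := exists_append_cons_of_mem_Dset hl hne
      exact Or.inr ⟨k, hk, l₁, l₂, ⟨h₁, h₂⟩, rfl⟩
  · rintro (rfl | ⟨k, hk, l₁, l₂, ⟨h₁, h₂⟩, rfl⟩)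
    exacts [nil_mem_Dset n, append_cons_mem_Dset hk h₁ h₂]

lemma Dset_finite (n : ℕ) : (Dset n).Finite := by
  induction n using Nat.strong_induction_on with
  | _ n ih =>
    rw [Dset_eq_insert]
    refine ((Finset.finite_toSet _).biUnion fun k hk => ?_).insert []
    have hkn := (Finset.mem_Ico.1 hk).2
    exact ((ih k hkn).prod (ih k hkn)).image _

lemma injOn_append_cons (k : ℕ) :
    (Dset k ×ˢ Dset k).InjOn fun p : List ℕ × List ℕ => p.1 ++ k :: p.2 := by
  rintro ⟨l₁, l₂⟩ ⟨h₁, h₂⟩ ⟨m₁, m₂⟩ ⟨h₁', h₂'⟩ h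
  obtain ⟨rfl, -, rfl⟩ :=
    eq_of_append_cons_eq (forall_mem_append_lt h₁ h₂) (forall_mem_append_lt h₁' h₂') h
  rfl

lemma pairwiseDisjoint_image_append_cons (s : Set ℕ) :
    s.PairwiseDisjoint fun k =>
      (fun p : List ℕ × List ℕ => p.1 ++ k :: p.2) '' Dset k ×ˢ Dset k := by
  refine fun k _ k' _ hne => Set.disjoint_left.2 ?_
  rintro _ ⟨⟨l₁, l₂⟩, ⟨h₁, h₂⟩, rfl⟩ ⟨⟨m₁, m₂⟩, ⟨h₁', h₂'⟩, h⟩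
  exact hne (eq_of_append_cons_eq (forall_mem_append_lt h₁' h₂') (forall_mem_append_lt h₁ h₂)
    h).2.1.symm

lemma finsum_mem_mul_finsum_mem {α β R : Type*} [NonUnitalNonAssocSemiring R] {s : Set α}
    {t : Set β} (hs : s.Finite) (ht : t.Finite) (f : α → R) (g : β → R) :
    (∑ᶠ a ∈ s, f a) * (∑ᶠ b ∈ t, g b) = ∑ᶠ p ∈ s ×ˢ t, f p.1 * g p.2 := by
  rw [finsum_mem_eq_finite_toFinset_sum _ hs, finsum_mem_eq_finite_toFinset_sum _ ht,
    finsum_mem_eq_finite_toFinset_sum _ (hs.prod ht), ← Set.Finite.toFinset_prod hs ht,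
    Finset.sum_mul_sum, Finset.sum_product]

section pathSum

variable {A : Type*} [Ring A] (B : ℕ → ℕ → A)

lemma pathProd_append_cons (i j k : ℕ) (l₁ l₂ : List ℕ) :
    pathProd B i j (l₁ ++ k :: l₂) = pathProd B i k l₁ * pathProd B k j l₂ := by
  induction l₁ generalizing i with
  | nil => rfl
  | cons a l ih => simp only [List.cons_append, pathProd, ih, mul_assoc]

noncomputable def pathSum (n i j : ℕ) : A :=
  ∑ᶠ l ∈ Dset n, pathProd B i j l

lemma pathSum_eq (n i j : ℕ) :
    pathSum B n i j = B i j + ∑ k ∈ Finset.Ico 1 n, pathSum B k i k * pathSum B k k j := by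
  have hfin := Dset_finite n
  rw [Dset_eq_insert, Set.finite_insert] at hfin
  rw [pathSum, Dset_eq_insert, finsum_mem_insert _ (by simp) hfin,
    finsum_mem_biUnion (pairwiseDisjoint_image_append_cons _) (Finset.finite_toSet _)
      fun k _ => ((Dset_finite k).prod (Dset_finite k)).image _,
    finsum_mem_coe_finset]
  refine congrArg _ (Finset.sum_congr rfl fun k _ => ?_)
  rw [finsum_mem_image (injOn_append_cons k), pathSum, pathSum,
    finsum_mem_mul_finsum_mem (Dset_finite k) (Dset_finite k)]
  simp only [pathProd_append_cons]

lemma Mpoly_eq (i j : ℕ) :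
    Mpoly B i j = B i j + ∑ k ∈ Finset.Ico 1 (min i j), Mpoly B i k * Mpoly B k j := by
  rw [Mpoly, ← pathSum, pathSum_eq]
  refine congrArg _ (Finset.sum_congr rfl fun k hk => ?_)
  have hk := (Finset.mem_Ico.1 hk).2
  rw [Mpoly, Mpoly, min_eq_right (by omega), min_eq_left (by omega), pathSum, pathSum]

lemma Mpoly_add_one_add_one (i j : ℕ) :
    Mpoly B (i + 1) (j + 1) = B (i + 1) (j + 1) +
      ∑ k ∈ Finset.range (min i j), Mpoly B (i + 1) (k + 1) * Mpoly B (k + 1) (j + 1) := by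
  rw [Mpoly_eq, Finset.range_eq_Ico,
    Finset.sum_Ico_add' (fun k => Mpoly B (i + 1) k * Mpoly B k (j + 1)), Nat.add_min_add_right]

end pathSum

section LU

variable {A : Type*} [Ring A]

lemma sum_range_lower_mul_upper (M : ℕ → ℕ → A) {q a b : ℕ} (ha : a < q) (hb : b < q) :
    ∑ k ∈ Finset.range q,
      (if a = k then -1 else if k < a then M a k else 0) *
        (if k = b then 1 else if k < b then -M k b else 0) =
      (if a = b then -1 else M a b) - ∑ k ∈ Finset.range (min a b), M a k * M k b := by
  rw [Finset.eventually_constant_sum (N := min a b + 1) (fun k hk => ?_) (by omega),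
    Finset.sum_range_succ, sub_eq_neg_add, ← Finset.sum_neg_distrib]
  · congr 1
    · refine Finset.sum_congr rfl fun k hk => ?_
      have hk := Finset.mem_range.1 hk
      rw [if_neg (by omega), if_pos (by omega), if_neg (by omega), if_pos (by omega), mul_neg]
    · rcases lt_trichotomy a b with h | rfl | h
      · simp [h, h.ne, min_eq_left h.le]
      · simp
      · simp [h, h.ne', min_eq_right h.le]
  · rcases min_lt_iff.1 (Nat.lt_of_succ_le hk) with h | h
    · rw [if_neg h.ne, if_neg (not_lt.2 h.le), zero_mul]
    · rw [if_neg h.ne', if_neg (not_lt.2 h.le), mul_zero]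

lemma lower_mul_upper_eq {q : ℕ} (M B : ℕ → ℕ → A)
    (hM : ∀ a b, M a b = B a b + ∑ k ∈ Finset.range (min a b), M a k * M k b)
    (L U : Matrix (Fin q) (Fin q) A)
    (hL : ∀ i j : Fin q, L i j = if (i : ℕ) = j then -1 else if (j : ℕ) < i then M i j else 0)
    (hU : ∀ i j : Fin q, U i j = if (i : ℕ) = j then 1 else if (i : ℕ) < j then -M i j else 0) :
    L * U = Matrix.of fun i j : Fin q => if (i : ℕ) = j then B i i - M i i - 1 else B i j := by
  ext i j
  have hsum := sum_range_lower_mul_upper M i.2 j.2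
  rw [Finset.sum_range] at hsum
  simp only [Matrix.mul_apply, Matrix.of_apply, hL, hU, hsum]
  split_ifs with h
  · rw [h, hM j j, min_self]
    abel
  · rw [hM i j]
    abel

end LU

lemma Cpoly_self {A : Type*} [Ring A] (B : ℕ → ℕ → A) (n : ℕ) : Cpoly B n n = Mpoly B n n :=
  if_pos rfl

theorem LU_eq_B_matrix_general (q : ℕ)
    (L U : Matrix (Fin q) (Fin q) (FreeAlgebra ℤ (ℕ × ℕ)))
    (hL : ∀ i j : Fin q, L i j =
      if (i : ℕ) = (j : ℕ) then -1
      else if (j : ℕ) < (i : ℕ) then Mpoly Bgen ((i : ℕ) + 1) ((j : ℕ) + 1) else 0)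
    (hU : ∀ i j : Fin q, U i j =
      if (i : ℕ) = (j : ℕ) then 1
      else if (i : ℕ) < (j : ℕ) then - Mpoly Bgen ((i : ℕ) + 1) ((j : ℕ) + 1) else 0) :
    L * U = Matrix.of fun i j : Fin q =>
      if (i : ℕ) = (j : ℕ) then
        Bgen ((i : ℕ) + 1) ((i : ℕ) + 1) - Cpoly Bgen ((i : ℕ) + 1) ((i : ℕ) + 1) - 1
      else Bgen ((i : ℕ) + 1) ((j : ℕ) + 1) := by
  simp only [Cpoly_self]
  exact lower_mul_upper_eq (fun a b => Mpoly Bgen (a + 1) (b + 1))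
    (fun a b => Bgen (a + 1) (b + 1)) (Mpoly_add_one_add_one Bgen) L U hL hU

/-- with `L` lower triangular (diagonal `−1`, entries `M_{i,j}` below) and
`U` unit upper triangular (entries `−M_{i,j}` above), the product `L·U` has entries
`B_{i,j}` off the diagonal and `B_{i,i} − C_{i,i} − 1` on the diagonal. -/
theorem LU_eq_B_matrix (q : ℕ) (hq : 1 ≤ q)
    (L U : Matrix (Fin q) (Fin q) (FreeAlgebra ℤ (ℕ × ℕ)))
    (hL : ∀ i j : Fin q, L i j =
      if (i : ℕ) = (j : ℕ) then -1
      else if (j : ℕ) < (i : ℕ) then Mpoly Bgen ((i : ℕ) + 1) ((j : ℕ) + 1) else 0)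
    (hU : ∀ i j : Fin q, U i j =
      if (i : ℕ) = (j : ℕ) then 1
      else if (i : ℕ) < (j : ℕ) then - Mpoly Bgen ((i : ℕ) + 1) ((j : ℕ) + 1) else 0) :
    L * U = Matrix.of fun i j : Fin q =>
      if (i : ℕ) = (j : ℕ) then
        Bgen ((i : ℕ) + 1) ((i : ℕ) + 1) - Cpoly Bgen ((i : ℕ) + 1) ((i : ℕ) + 1) - 1
      else Bgen ((i : ℕ) + 1) ((j : ℕ) + 1) :=
  LU_eq_B_matrix_general q L U hL hU
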